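/- Define the Quicksort comparison count qc : List ℕ → ℕ recursively by qc([]) = 0 and qc(p :: l) = (length of l) + qc(filter of l by elements < p) + qc(filter of l by elements > p), and let N(n,i) be the number of permutations (as lists) of {1,…,n} with qc equal to i. For n ≥ 1 set k := ⌊log₂(n+1)⌋, m_n := k(n+1) − 2^{k+1} + 2, and M_n := n(n−1)/2 (with m_0 = M_0 = 0). Then for all n and i: N(n,i) > 0 if and only if m_n ≤ i ≤ M_n. -/

import Mathlib

/-- Number of key comparisons made by Quicksort, using the first element as pivot. -/
def qc : List ℕ → ℕ
  | [] => 0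
  | p :: l => l.length + qc (l.filter (fun x => x < p)) + qc (l.filter (fun x => p < x))
termination_by l => l.length
decreasing_by
  all_goals first
    | exact Nat.lt_succ_of_le (List.length_filter_le _ _)
    | (rw [List.length_unattach]; exact Nat.lt_succ_of_le ((List.length_filter_le _ _).trans_eq List.length_attach))
    | exact Nat.lt_succ_of_le (by simpa using List.length_filter_le _ _)

/-- `N n i` is the number of permutations (as lists) of `{1, …, n}` on which Quicksort
makes exactly `i` key comparisons. -/
def N (n i : ℕ) : ℕ :=
  ((List.range' 1 n).permutations.filter (fun σ => qc σ = i)).length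

/-- `m n = k (n+1) - 2^(k+1) + 2` with `k = ⌊log₂ (n+1)⌋`; the least possible number of
comparisons (total path length of the complete tree on `n` nodes).  Note `m 0 = 0`. -/
def m (n : ℕ) : ℕ :=
  Nat.log 2 (n + 1) * (n + 1) + 2 - 2 ^ (Nat.log 2 (n + 1) + 1)

/-!
The pivot of a permutation of an interval of length `n + 1` has some rank `a + 1`, and Quicksort
then recurses on permutations of the two subintervals of lengths `a` and `b = n - a`; conversely,
any two such permutations arise below that pivot. Hence the set `V n` of comparison counts satisfies
`V (n + 1) = ⋃_{a + b = n} (n + V a + V b)`, and by induction `V n` is the whole interval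
`[qcMin n, qcMax n]` with `qcMin n = ∑_{i ≤ n} ⌊log₂ i⌋` and `qcMax n = n (n - 1) / 2`. The lower
end comes from the balanced split, since `qcMin` has nondecreasing increments; the upper end from
`a = 0`; and the ranges for consecutive `a` overlap, so their union has no gaps. Finally `qcMin n`
is the closed form `m n`.
-/

open Finset

def qcMin (n : ℕ) : ℕ := ∑ i ∈ range n, Nat.log 2 (i + 1)

def qcMax (n : ℕ) : ℕ := ∑ i ∈ range n, i

lemma qcMin_succ (n : ℕ) : qcMin (n + 1) = qcMin n + Nat.log 2 (n + 1) :=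
  sum_range_succ _ _

lemma qcMax_zero : qcMax 0 = 0 := rfl

lemma qcMax_succ (n : ℕ) : qcMax (n + 1) = qcMax n + n :=
  sum_range_succ _ _

lemma qcMax_eq (n : ℕ) : qcMax n = n * (n - 1) / 2 :=
  sum_range_id n

lemma qcMax_add_le (a b : ℕ) : qcMax a + qcMax b ≤ qcMax (a + b) := by
  rw [qcMax, qcMax, qcMax, sum_range_add]
  exact Nat.add_le_add_left (sum_le_sum fun i _ => Nat.le_add_left i a) _

lemma qcMin_le_qcMax (n : ℕ) : qcMin n ≤ qcMax n :=
  sum_le_sum fun i _ => Nat.lt_succ_iff.1 (Nat.log_lt_self 2 i.succ_ne_zero)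

lemma qcMin_succ_le (n : ℕ) : qcMin (n + 1) ≤ qcMax n + 1 := by
  rcases Nat.eq_zero_or_pos n with rfl | hn
  · simp [qcMin]
  induction n, hn using Nat.le_induction with
  | base =>
    simpa [qcMin, qcMax, sum_range_succ] using (Nat.log_pow one_lt_two 1).le
  | succ n hn ih =>
    have : Nat.log 2 (n + 1 + 1) < n + 1 :=
      Nat.log_lt_of_lt_pow (by omega) <| by
        have := n.lt_two_pow_self
        rw [pow_succ]
        omega
    rw [qcMin_succ, qcMax_succ]
    omega

lemma sum_range_add_sum_range_le_of_monotone {g : ℕ → ℕ} (hg : Monotone g) {a b c d : ℕ}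
    (hac : a ≤ c) (hcd : c ≤ d) (habcd : a + b = c + d) :
    ∑ i ∈ range c, g i + ∑ i ∈ range d, g i ≤ ∑ i ∈ range a, g i + ∑ i ∈ range b, g i := by
  obtain ⟨k, hk⟩ := Nat.exists_eq_add_of_le hac
  induction k generalizing a b with
  | zero =>
    obtain rfl : c = a := hk
    obtain rfl : d = b := by omega
    exact le_rfl
  | succ k ih =>
    obtain ⟨b, rfl⟩ : ∃ b', b = b' + 1 := ⟨b - 1, by omega⟩
    refine (ih (a := a + 1) (b := b) (by omega) (by omega) (by omega)).trans ?_
    rw [sum_range_succ, sum_range_succ]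
    have := hg (show a ≤ b by omega)
    omega

lemma qcMin_halves_le {a b : ℕ} (n : ℕ) (hab : a + b = n) :
    qcMin (n / 2) + qcMin ((n + 1) / 2) ≤ qcMin a + qcMin b := by
  wlog h : a ≤ b
  · rw [add_comm (qcMin a)]
    exact this (a := b) (b := a) n (by omega) (by omega)
  exact sum_range_add_sum_range_le_of_monotone (fun i j hij => Nat.log_mono_right (by omega))
    (by omega) (by omega) (by omega)

lemma qcMin_succ_eq_add_halves (n : ℕ) :
    qcMin (n + 1) = n + qcMin (n / 2) + qcMin ((n + 1) / 2) := by
  induction n with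
  | zero => simp [qcMin]
  | succ n ih =>
    have hlog : Nat.log 2 (n + 2) = Nat.log 2 (n / 2 + 1) + 1 := by
      rw [Nat.log_of_one_lt_of_le (by norm_num) (by omega), show (n + 2) / 2 = n / 2 + 1 by omega]
    rw [qcMin_succ, ih, show (n + 1 + 1) / 2 = n / 2 + 1 by omega, qcMin_succ, hlog]
    omega

lemma qcMin_add_two_pow (n : ℕ) :
    qcMin n + 2 ^ (Nat.log 2 (n + 1) + 1) = Nat.log 2 (n + 1) * (n + 1) + 2 := by
  induction n with
  | zero => simp [qcMin]
  | succ n ih =>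
    set k := Nat.log 2 (n + 1)
    have hlt : n + 1 < 2 ^ (k + 1) := Nat.lt_pow_succ_log_self (by norm_num) _
    have hle : 2 ^ k ≤ n + 1 := Nat.pow_log_le_self 2 (by omega)
    rw [qcMin_succ]
    rcases (show n + 2 ≤ 2 ^ (k + 1) by omega).lt_or_eq with h | h
    · rw [Nat.log_eq_of_pow_le_of_lt_pow (by omega) h]
      nlinarith
    · rw [h, Nat.log_pow (by norm_num), pow_succ 2 (k + 1), ← h]
      nlinarith

lemma m_eq_qcMin (n : ℕ) : m n = qcMin n := by
  have := qcMin_add_two_pow n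
  unfold m
  omega

lemma List.perm_range'_iff {l : List ℕ} {s n : ℕ} :
    l.Perm (List.range' s n) ↔ l.Nodup ∧ ∀ x, x ∈ l ↔ s ≤ x ∧ x < s + n := by
  refine ⟨fun h => ⟨h.nodup_iff.2 List.nodup_range', fun x => h.mem_iff.trans List.mem_range'_1⟩,
    fun ⟨hl, hmem⟩ => (List.perm_ext_iff_of_nodup hl List.nodup_range').2 fun x => ?_⟩
  rw [hmem, List.mem_range'_1]

-- Intervals with an arbitrary start `s`, so that the sublist above the pivot needs no relabelling.
def qcValues (s n : ℕ) : Set ℕ := qc '' {σ | σ.Perm (List.range' s n)}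

lemma zero_lt_N_iff (n i : ℕ) : 0 < N n i ↔ i ∈ qcValues 1 n := by
  simp [N, qcValues, List.length_pos_iff_exists_mem, List.mem_filter, List.mem_permutations]

lemma qcValues_zero (s : ℕ) : qcValues s 0 = {0} := by
  ext i
  simp [qcValues, qc]

lemma exists_of_mem_qcValues_succ {s n i : ℕ} (h : i ∈ qcValues s (n + 1)) :
    ∃ a b j k, a + b = n ∧ j ∈ qcValues s a ∧ k ∈ qcValues (s + a + 1) b ∧ i = n + j + k := by
  obtain ⟨_ | ⟨p, l⟩, hσ, rfl⟩ := h
  · simpa using hσ.length_eq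
  have hlen : l.length = n := by simpa using hσ.length_eq
  obtain ⟨hnd, hmem⟩ := List.perm_range'_iff.1 hσ
  obtain ⟨hpl, hl⟩ := List.nodup_cons.1 hnd
  have hp := (hmem p).1 List.mem_cons_self
  have hmem_l : ∀ x, x ∈ l ↔ x ≠ p ∧ s ≤ x ∧ x < s + (n + 1) := fun x => by
    rw [← hmem, List.mem_cons]
    constructor
    · exact fun hx => ⟨fun h => hpl (h ▸ hx), .inr hx⟩
    · exact fun ⟨hxp, hx⟩ => hx.resolve_left hxp
  refine ⟨p - s, s + n - p, qc (l.filter (· < p)), qc (l.filter (p < ·)), by omega,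
    ⟨_, ?_, rfl⟩, ⟨_, ?_, rfl⟩, by rw [qc, hlen]⟩
  · refine List.perm_range'_iff.2 ⟨hl.filter _, fun x => ?_⟩
    simp only [List.mem_filter, hmem_l, decide_eq_true_eq]
    omega
  · refine List.perm_range'_iff.2 ⟨hl.filter _, fun x => ?_⟩
    simp only [List.mem_filter, hmem_l, decide_eq_true_eq]
    omega

lemma add_mem_qcValues {s a b j k : ℕ} (hj : j ∈ qcValues s a)
    (hk : k ∈ qcValues (s + a + 1) b) : a + b + j + k ∈ qcValues s (a + b + 1) := by
  obtain ⟨σ, hσ, rfl⟩ := hj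
  obtain ⟨τ, hτ, rfl⟩ := hk
  obtain ⟨hσ_nd, hσ_mem⟩ := List.perm_range'_iff.1 hσ
  obtain ⟨hτ_nd, hτ_mem⟩ := List.perm_range'_iff.1 hτ
  refine ⟨(s + a) :: (σ ++ τ), List.perm_range'_iff.2 ⟨?_, fun x => ?_⟩, ?_⟩
  · simp only [List.nodup_cons, List.nodup_append, List.mem_append, hσ_mem, hτ_mem, hσ_nd,
      hτ_nd, true_and]
    exact ⟨by omega, fun x hx y hy => by omega⟩
  · simp only [List.mem_cons, List.mem_append, hσ_mem, hτ_mem]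
    omega
  · have h_lt : (σ ++ τ).filter (· < s + a) = σ := by
      rw [List.filter_append,
        List.filter_eq_self.2 fun x hx => by simp only [hσ_mem] at hx; simpa using hx.2,
        List.filter_eq_nil_iff.2 fun x hx => by simp only [hτ_mem] at hx; simp; omega,
        List.append_nil]
    have h_gt : (σ ++ τ).filter (s + a < ·) = τ := by
      rw [List.filter_append,
        List.filter_eq_nil_iff.2 fun x hx => by simp only [hσ_mem] at hx; simp; omega,
        List.filter_eq_self.2 fun x hx => by simp only [hτ_mem] at hx; simp; omega,
        List.nil_append]
    rw [qc, h_lt, h_gt, List.length_append, hσ.length_eq, hτ.length_eq, List.length_range',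
      List.length_range']

lemma exists_mem_Icc_of_chain {lo hi : ℕ → ℕ} {c x : ℕ} (hchain : ∀ a < c, lo a ≤ hi (a + 1) + 1)
    (hlo : lo c ≤ x) (hhi : x ≤ hi 0) : ∃ a ≤ c, lo a ≤ x ∧ x ≤ hi a := by
  induction c with
  | zero => exact ⟨0, le_rfl, hlo, hhi⟩
  | succ c ih =>
    by_cases h : lo c ≤ x
    · obtain ⟨a, hac, ha⟩ := ih (fun a ha => hchain a (by omega)) h
      exact ⟨a, by omega, ha⟩
    · exact ⟨c + 1, le_rfl, hlo, by have := hchain c (by omega); omega⟩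

lemma qcValues_succ_subset {n : ℕ}
    (ih : ∀ a ≤ n, ∀ s, qcValues s a ⊆ Set.Icc (qcMin a) (qcMax a)) (s : ℕ) :
    qcValues s (n + 1) ⊆ Set.Icc (qcMin (n + 1)) (qcMax (n + 1)) := by
  intro i hi
  obtain ⟨a, b, j, k, rfl, hj, hk, rfl⟩ := exists_of_mem_qcValues_succ hi
  obtain ⟨hj_lo, hj_hi⟩ := ih a (by omega) s hj
  obtain ⟨hk_lo, hk_hi⟩ := ih b (by omega) _ hk
  have := qcMin_halves_le (a + b) rfl
  have := qcMin_succ_eq_add_halves (a + b)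
  have := qcMax_add_le a b
  have := qcMax_succ (a + b)
  constructor <;> omega

lemma Icc_subset_qcValues_succ {n : ℕ}
    (ih : ∀ a ≤ n, ∀ s, Set.Icc (qcMin a) (qcMax a) ⊆ qcValues s a) (s : ℕ) :
    Set.Icc (qcMin (n + 1)) (qcMax (n + 1)) ⊆ qcValues s (n + 1) := by
  rintro i ⟨hi_lo, hi_hi⟩
  have hchain : ∀ a < n / 2,
      qcMin a + qcMin (n - a) ≤ qcMax (a + 1) + qcMax (n - (a + 1)) + 1 := fun a ha => by
    have := qcMin_le_qcMax a
    have := qcMax_succ a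
    have := qcMin_succ_le (n - (a + 1))
    rw [show n - (a + 1) + 1 = n - a by omega] at this
    omega
  have := qcMin_succ_eq_add_halves n
  have := qcMax_succ n
  obtain ⟨a, ha, h_lo, h_hi⟩ : ∃ a ≤ n / 2,
      qcMin a + qcMin (n - a) ≤ i - n ∧ i - n ≤ qcMax a + qcMax (n - a) :=
    exists_mem_Icc_of_chain
    (lo := fun a => qcMin a + qcMin (n - a)) (hi := fun a => qcMax a + qcMax (n - a))
    (x := i - n) hchain (by rw [show n - n / 2 = (n + 1) / 2 by omega]; omega)
    (by rw [Nat.sub_zero, qcMax_zero]; omega)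
  obtain ⟨j, k, hj, hk, rfl⟩ : ∃ j k, (qcMin a ≤ j ∧ j ≤ qcMax a) ∧
      (qcMin (n - a) ≤ k ∧ k ≤ qcMax (n - a)) ∧ n + j + k = i := by
    have := qcMin_le_qcMax a
    have := qcMin_le_qcMax (n - a)
    rcases le_total (i - n) (qcMin a + qcMax (n - a)) with h | h
    · exact ⟨qcMin a, i - n - qcMin a, by omega, by omega, by omega⟩
    · exact ⟨i - n - qcMax (n - a), qcMax (n - a), by omega, by omega, by omega⟩
  have := add_mem_qcValues (ih a (by omega) s hj) (ih (n - a) (by omega) _ hk)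
  rwa [show a + (n - a) = n by omega] at this

lemma qcValues_eq_Icc (n : ℕ) : ∀ s, qcValues s n = Set.Icc (qcMin n) (qcMax n) := by
  induction n using Nat.strong_induction_on with
  | _ n ih =>
    rcases n with _ | n
    · simp [qcValues_zero, qcMin, qcMax]
    · exact fun s => (qcValues_succ_subset (fun a ha s => (ih a (by omega) s).le) s).antisymm
        (Icc_subset_qcValues_succ (fun a ha s => (ih a (by omega) s).ge) s)

/-- `N n i > 0` if and only if `m n ≤ i ≤ M n` where `M n = n (n-1)/2`. -/
theorem stmt6 (n i : ℕ) : 0 < N n i ↔ m n ≤ i ∧ i ≤ n * (n - 1) / 2 := by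
  rw [zero_lt_N_iff, qcValues_eq_Icc, Set.mem_Icc, m_eq_qcMin, qcMax_eq]
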